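/- If H is a rational hyperplane with the two opposite regular faces ±F_H in H^⊥ and q ∈ DM(X∩H), then (P_{X\H}^{F_H} - P_{X\H}^{-F_H}) * q belongs to DM(X). -/

import Mathlib

/-!
For a rational hyperplane `K ≠ H` of `V`, the operator `∇_{X\K}` contains the factor
`∇_{(X∩H)\K}`. Its vectors lie in `H ⊆ w^⊥`, so it commutes past `𝓟^{±F_H}` onto `q`
(the convolution is a finite sum because `𝓟^{±F_H}` has finite support on every slice
`⟨w, ·⟩ = c` and `q` lives on `⟨w, ·⟩ = 0`), and it kills `q` since `(X∩H)∩K` lies in a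
rational hyperplane of `H`. For `K = H`, `∇_{X\H}` falls on `𝓟^{±F_H}`, and
`∇_{X\H} 𝓟^{±F_H} = δ₀` turns both terms into `q`.
-/

open Function

attribute [local instance] Classical.propDecidable

noncomputable section

/-- The lattice `Γ = ι → ℤ`. -/
abbrev ZLat (ι : Type*) := ι → ℤ
/-- The ambient real vector space `V = Γ ⊗ ℝ = ι → ℝ`. -/
abbrev Amb (ι : Type*) := ι → ℝ

variable {ι : Type*} [Fintype ι]

/-- Embedding of the lattice into the ambient space. -/
def castV (γ : ZLat ι) : Amb ι := fun i => (γ i : ℝ)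

/-- Standard pairing on `V`. -/
def dotR (u v : Amb ι) : ℝ := ∑ i, u i * v i

/-- The difference operator `∇ₐ`. -/
def nab (a : ZLat ι) (f : ZLat ι → ℤ) : ZLat ι → ℤ := fun b => f b - f (b - a)

/-- `∇_Y = ∏_{a ∈ Y} ∇ₐ` for a list `Y`. -/
def nabL (Y : List (ZLat ι)) (f : ZLat ι → ℤ) : ZLat ι → ℤ := Y.foldr nab f

/-- Delta function at `0`. -/
def delta0 : ZLat ι → ℤ := fun γ => if γ = 0 then 1 else 0

/-- The partition function of a list `Y`: the number of ways of writing `γ` as a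
nonnegative integral combination of the entries of `Y`. -/
def partFn (Y : List (ZLat ι)) : ZLat ι → ℤ :=
  fun γ => Nat.card {k : Fin Y.length → ℕ // ∑ i, (k i : ℤ) • Y.get i = γ}

/-- The cone `C(Y)` of nonnegative real combinations of the entries of `Y`. -/
def coneC (Y : List (ZLat ι)) : Set (Amb ι) :=
  {v | ∃ t : Fin Y.length → ℝ, (∀ i, 0 ≤ t i) ∧ v = ∑ i, t i • castV (Y.get i)}

/-- `C(Y)` is pointed: it contains no line. -/
def PointedList (Y : List (ZLat ι)) : Prop :=
  ∀ v ∈ coneC Y, -v ∈ coneC Y → v = 0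

/-- The zonotope `B(Y) = {∑ tᵢ aᵢ : 0 ≤ tᵢ ≤ 1}`. -/
def zono (Y : List (ZLat ι)) : Set (Amb ι) :=
  {v | ∃ t : Fin Y.length → ℝ, (∀ i, 0 ≤ t i ∧ t i ≤ 1) ∧ v = ∑ i, t i • castV (Y.get i)}

/-- The real span of a list of lattice vectors. -/
def spanOf (Y : List (ZLat ι)) : Submodule ℝ (Amb ι) :=
  Submodule.span ℝ (castV '' {a | a ∈ Y})

/-- A subspace is rational (relative to `X`) if it is spanned by a sublist of `X`. -/
def IsRational (X : List (ZLat ι)) (r : Submodule ℝ (Amb ι)) : Prop :=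
  ∃ Y : List (ZLat ι), (∀ a ∈ Y, a ∈ X) ∧ r = spanOf Y

/-- The sublist `X ∩ r`. -/
def inSub (X : List (ZLat ι)) (r : Submodule ℝ (Amb ι)) : List (ZLat ι) :=
  X.filter (fun a => decide (castV a ∈ r))

/-- The sublist `X \ r`. -/
def outSub (X : List (ZLat ι)) (r : Submodule ℝ (Amb ι)) : List (ZLat ι) :=
  X.filter (fun a => decide (castV a ∉ r))

/-- The operator `∇_{X \ r}`. -/
def nabOut (X : List (ZLat ι)) (r : Submodule ℝ (Amb ι)) (f : ZLat ι → ℤ) : ZLat ι → ℤ :=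
  nabL (outSub X r) f

/-- The space `𝓕(X)`: `∇_{X\r} f` is supported on `Γ ∩ r` for every rational `r`. -/
def memF (X : List (ZLat ι)) (f : ZLat ι → ℤ) : Prop :=
  ∀ r, IsRational X r → support (nabOut X r f) ⊆ {γ | castV γ ∈ r}

/-- The Dahmen–Micchelli space of a list `Y` (inside its span): `f` is killed by
`∇_{Y \ H}` for every rational hyperplane `H` of the span of `Y`. -/
def memDM (Y : List (ZLat ι)) (f : ZLat ι → ℤ) : Prop :=
  ∀ H, IsRational Y H → Module.finrank ℝ H + 1 = Module.finrank ℝ (spanOf Y) →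
    nabOut Y H f = 0

/-- `𝓕(X ∩ r)`, viewed as functions on `Γ` supported on `Γ ∩ r`. -/
def memFrel (X : List (ZLat ι)) (r : Submodule ℝ (Amb ι)) (g : ZLat ι → ℤ) : Prop :=
  support g ⊆ {γ | castV γ ∈ r} ∧ memF (inSub X r) g

/-- `DM(X ∩ r)`, viewed as functions on `Γ` supported on `Γ ∩ r`. -/
def memDMrel (X : List (ZLat ι)) (r : Submodule ℝ (Amb ι)) (g : ZLat ι → ℤ) : Prop :=
  support g ⊆ {γ | castV γ ∈ r} ∧ memDM (inSub X r) g

/-- `u` is a regular vector for `X \ r`:  `u ∈ r^⊥` and `⟨u, a⟩ ≠ 0` for all `a ∈ X \ r`.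
It determines the regular face `F` containing it. -/
def Reg (X : List (ZLat ι)) (r : Submodule ℝ (Amb ι)) (u : Amb ι) : Prop :=
  (∀ v ∈ r, dotR u v = 0) ∧ ∀ a ∈ X, castV a ∉ r → dotR u (castV a) ≠ 0

/-- The sublist `B ⊆ X \ r` of elements negative on `u`. -/
def negPart (X : List (ZLat ι)) (r : Submodule ℝ (Amb ι)) (u : Amb ι) : List (ZLat ι) :=
  (outSub X r).filter (fun a => decide (dotR u (castV a) < 0))

/-- The list `[A, -B]`: entries of `X \ r`, with sign flipped on the part negative on `u`. -/
def signedOut (X : List (ZLat ι)) (r : Submodule ℝ (Amb ι)) (u : Amb ι) : List (ZLat ι) :=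
  (outSub X r).map (fun a => if 0 < dotR u (castV a) then a else -a)

/-- The special function `𝓟_{X\r}^F` for the face `F ∋ u`:
`(-1)^{|B|} τ_{-∑_{b∈B} b} (∏_{a∈A} ∑_k δ_{ka}) * (∏_{b∈B} ∑_k δ_{-kb})`. -/
def PF (X : List (ZLat ι)) (r : Submodule ℝ (Amb ι)) (u : Amb ι) : ZLat ι → ℤ :=
  fun γ => (-1) ^ (negPart X r u).length *
    partFn (signedOut X r u) (γ + (negPart X r u).sum)

/-- The support region `-∑_{b∈B} b + C(A, -B)` of `𝓟_{X\r}^F`, as a subset of `Γ`. -/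
def PFsupp (X : List (ZLat ι)) (r : Submodule ℝ (Amb ι)) (u : Amb ι) : Set (ZLat ι) :=
  {γ | castV (γ + (negPart X r u).sum) ∈ coneC (signedOut X r u)}

/-- Convolution of two functions on the lattice. -/
def conv (f g : ZLat ι → ℤ) : ZLat ι → ℤ := fun γ => ∑ᶠ μ, f (γ - μ) * g μ

/-- The union of all rational hyperplanes (inside the span of `Y`). -/
def hyperUnion (Y : List (ZLat ι)) : Set (Amb ι) :=
  {v | ∃ H, IsRational Y H ∧ Module.finrank ℝ H + 1 = Module.finrank ℝ (spanOf Y) ∧ v ∈ H}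

/-- A tope for `Y`: a connected component of the complement (in the span of `Y`) of the
union of the hyperplanes spanned by sublists of `Y`. -/
def IsTope (Y : List (ZLat ι)) (τ : Set (Amb ι)) : Prop :=
  ∃ v ∈ (spanOf Y : Set (Amb ι)) \ hyperUnion Y,
    τ = connectedComponentIn ((spanOf Y : Set (Amb ι)) \ hyperUnion Y) v

/-- The set of singular vectors: the union of the cones `C(Y)` over sublists `Y` of `X`
not spanning `V`. -/
def singSet (X : List (ZLat ι)) : Set (Amb ι) :=
  {v | ∃ Y : List (ZLat ι), (∀ a ∈ Y, a ∈ X) ∧ spanOf Y ≠ ⊤ ∧ v ∈ coneC Y}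

/-- A big cell: a connected component of the complement of the set of singular vectors. -/
def IsBigCell (X : List (ZLat ι)) (c : Set (Amb ι)) : Prop :=
  ∃ v ∈ (singSet X)ᶜ, c = connectedComponentIn (singSet X)ᶜ v

/-- Minkowski difference of sets, `A - B`. -/
def sdiffSet (A B : Set (Amb ι)) : Set (Amb ι) := {x | ∃ a ∈ A, ∃ b ∈ B, x = a - b}


section Nabla

variable {ι : Type*}

lemma nabL_nil (f : ZLat ι → ℤ) : nabL [] f = f := rfl

lemma nabL_cons (a : ZLat ι) (l : List (ZLat ι)) (f : ZLat ι → ℤ) :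
    nabL (a :: l) f = nab a (nabL l f) := rfl

lemma nabL_append (l₁ l₂ : List (ZLat ι)) (f : ZLat ι → ℤ) :
    nabL (l₁ ++ l₂) f = nabL l₁ (nabL l₂ f) :=
  List.foldr_append ..

lemma nab_comm (a b : ZLat ι) (f : ZLat ι → ℤ) : nab a (nab b f) = nab b (nab a f) := by
  funext γ
  simp only [nab, sub_right_comm γ b a]
  ring

lemma nabL_perm {l₁ l₂ : List (ZLat ι)} (h : l₁.Perm l₂) (f : ZLat ι → ℤ) :
    nabL l₁ f = nabL l₂ f := by
  induction h with
  | nil => rfl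
  | cons a _ ih => rw [nabL_cons, nabL_cons, ih]
  | swap a b l => exact nab_comm ..
  | trans _ _ ih₁ ih₂ => rw [ih₁, ih₂]

lemma nabL_filter (p : ZLat ι → Bool) (l : List (ZLat ι)) (f : ZLat ι → ℤ) :
    nabL l f = nabL (l.filter p) (nabL (l.filter (fun a => !p a)) f) := by
  rw [← nabL_append]
  exact nabL_perm (List.filter_append_perm p l).symm f

lemma nabL_zero (l : List (ZLat ι)) : nabL l (0 : ZLat ι → ℤ) = 0 := by
  induction l with
  | nil => rfl
  | cons a l ih => rw [nabL_cons, ih]; funext γ; simp [nab]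

lemma nabL_sub (l : List (ZLat ι)) (f g : ZLat ι → ℤ) :
    nabL l (f - g) = nabL l f - nabL l g := by
  induction l with
  | nil => rfl
  | cons a l ih => funext γ; simp only [nabL_cons, ih, nab, Pi.sub_apply]; ring

lemma nabL_mul_shift (l : List (ZLat ι)) (c : ℤ) (s : ZLat ι) (f : ZLat ι → ℤ) :
    nabL l (fun γ => c * f (γ + s)) = fun γ => c * nabL l f (γ + s) := by
  induction l with
  | nil => rfl
  | cons a l ih => funext γ; simp only [nabL_cons, ih, nab, sub_add_eq_add_sub]; ring

lemma conv_zero (f : ZLat ι → ℤ) : conv f 0 = 0 := by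
  funext γ
  simp [conv]

lemma ne_zero_or_of_nab_ne_zero {a γ : ZLat ι} {f : ZLat ι → ℤ} (h : nab a f γ ≠ 0) :
    f γ ≠ 0 ∨ f (γ - a) ≠ 0 := by
  by_contra! h'
  exact h (by simp [nab, h'.1, h'.2])

/-- Since `∇_a f (γ) = -∇_{-a} f (γ - a)`, flipping the entries selected by `s` costs a sign
and a translation each. -/
lemma nabL_eq_flip (s : ZLat ι → Bool) (l : List (ZLat ι)) (f : ZLat ι → ℤ) :
    nabL l f = fun γ => (-1) ^ (l.filter s).length *
      nabL (l.map fun a => if s a then -a else a) f (γ - (l.filter s).sum) := by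
  induction l with
  | nil => funext γ; simp [nabL_nil]
  | cons a l ih =>
    funext γ
    cases h : s a
    · simp only [nabL_cons, ih, nab, List.filter_cons, List.map_cons, h, Bool.false_eq_true,
        if_false, sub_right_comm γ a]
      ring
    · simp only [nabL_cons, ih, nab, List.filter_cons_of_pos h, List.map_cons, h, if_true,
        List.length_cons, List.sum_cons, pow_succ, sub_neg_eq_add, sub_add_eq_sub_sub]
      ring_nf

lemma nabL_flip (s : ZLat ι → Bool) (l : List (ZLat ι)) (f : ZLat ι → ℤ) :
    nabL l (fun γ => (-1) ^ (l.filter s).length * f (γ + (l.filter s).sum))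
      = nabL (l.map fun a => if s a then -a else a) f := by
  rw [nabL_mul_shift, nabL_eq_flip s]
  funext γ
  dsimp only
  rw [add_sub_cancel_right, ← mul_assoc, ← pow_add, Even.neg_one_pow ⟨_, rfl⟩, one_mul]

end Nabla

section Pairing

variable {ι : Type*} [Fintype ι]

lemma dotR_neg_left (u v : Amb ι) : dotR (-u) v = -dotR u v := by
  simp [dotR, Finset.sum_neg_distrib]

lemma dotR_castV_add (u : Amb ι) (x y : ZLat ι) :
    dotR u (castV (x + y)) = dotR u (castV x) + dotR u (castV y) := by
  simp [dotR, castV, mul_add, Finset.sum_add_distrib]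

lemma dotR_castV_sub (u : Amb ι) (x y : ZLat ι) :
    dotR u (castV (x - y)) = dotR u (castV x) - dotR u (castV y) := by
  simp [dotR, castV, mul_sub, Finset.sum_sub_distrib]

lemma dotR_castV_neg (u : Amb ι) (x : ZLat ι) : dotR u (castV (-x)) = -dotR u (castV x) := by
  simp [dotR, castV, Finset.sum_neg_distrib]

lemma dotR_castV_sum_smul {m : ℕ} (u : Amb ι) (Y : Fin m → ZLat ι) (k : Fin m → ℕ) :
    dotR u (castV (∑ i, (k i : ℤ) • Y i)) = ∑ i, (k i : ℝ) * dotR u (castV (Y i)) := by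
  simp only [dotR, castV, Finset.sum_apply, Pi.smul_apply, smul_eq_mul, Int.cast_sum,
    Int.cast_mul, Int.cast_natCast, Finset.mul_sum]
  rw [Finset.sum_comm]
  exact Finset.sum_congr rfl fun i _ => Finset.sum_congr rfl fun j _ => by ring

/-- All coefficients are bounded by `c / min_i ⟨u, Y i⟩`. -/
lemma finite_coeffs_of_dotR_eq {m : ℕ} (u : Amb ι) (Y : Fin m → ZLat ι)
    (hpos : ∀ i, 0 < dotR u (castV (Y i))) (c : ℝ) :
    {k : Fin m → ℕ | dotR u (castV (∑ i, (k i : ℤ) • Y i)) = c}.Finite := by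
  rcases isEmpty_or_nonempty (Fin m) with hm | hm
  · exact Set.toFinite _
  set δ := Finset.univ.inf' Finset.univ_nonempty fun i => dotR u (castV (Y i))
  have hδ : 0 < δ := (Finset.lt_inf'_iff _).mpr fun i _ => hpos i
  refine (Set.Finite.pi fun _ : Fin m => Set.finite_Iic ⌈c / δ⌉₊).subset fun k hk i _ => ?_
  rw [Set.mem_ofPred_eq, dotR_castV_sum_smul] at hk
  have hki : (k i : ℝ) * δ ≤ c := calc
    (k i : ℝ) * δ ≤ (k i : ℝ) * dotR u (castV (Y i)) :=
      mul_le_mul_of_nonneg_left (Finset.inf'_le _ (Finset.mem_univ i)) (Nat.cast_nonneg _)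
    _ ≤ ∑ j, (k j : ℝ) * dotR u (castV (Y j)) :=
      Finset.single_le_sum (fun j _ => mul_nonneg (Nat.cast_nonneg _) (hpos j).le)
        (Finset.mem_univ i)
    _ = c := hk
  exact Nat.cast_le.mp (((le_div_iff₀ hδ).mpr hki).trans (Nat.le_ceil _))

end Pairing

section PartitionFunction

variable {ι : Type*}

abbrev PartSols (Y : List (ZLat ι)) (γ : ZLat ι) : Type :=
  {k : Fin Y.length → ℕ // ∑ i, (k i : ℤ) • Y.get i = γ}

lemma partFn_apply (Y : List (ZLat ι)) (γ : ZLat ι) : partFn Y γ = Nat.card (PartSols Y γ) :=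
  rfl

lemma sum_smul_get_cons (a : ZLat ι) (S : List (ZLat ι)) (k : Fin (a :: S).length → ℕ) :
    ∑ i, (k i : ℤ) • (a :: S).get i
      = (k 0 : ℤ) • a + ∑ i, (Fin.tail k i : ℤ) • S.get i :=
  Fin.sum_univ_succ _

/-- Split the solutions for `a :: S` by whether the coefficient of `a` vanishes. -/
def partSolsConsEquiv (a : ZLat ι) (S : List (ZLat ι)) (γ : ZLat ι) :
    PartSols S γ ⊕ PartSols (a :: S) (γ - a) ≃ PartSols (a :: S) γ where
  toFun
    | .inl k => ⟨Fin.cons 0 k.1, by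
        rw [sum_smul_get_cons]
        simpa only [Fin.cons_zero, Fin.tail_cons, Nat.cast_zero, zero_smul, zero_add] using k.2⟩
    | .inr k => ⟨Fin.cons (k.1 0 + 1) (Fin.tail k.1), by
        have hk := k.2
        rw [sum_smul_get_cons, eq_sub_iff_add_eq] at hk
        rw [sum_smul_get_cons, Fin.cons_zero, Fin.tail_cons]
        refine Eq.trans ?_ hk
        rw [Nat.cast_succ, add_smul, one_smul]
        abel⟩
  invFun k :=
    if h : k.1 0 = 0 then .inl ⟨Fin.tail k.1, by
      have hk := k.2
      rwa [sum_smul_get_cons, h, Nat.cast_zero, zero_smul, zero_add] at hk⟩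
    else .inr ⟨Fin.cons (k.1 0 - 1) (Fin.tail k.1), by
      have hk := k.2
      rw [sum_smul_get_cons] at hk
      rw [sum_smul_get_cons, Fin.cons_zero, Fin.tail_cons, eq_sub_iff_add_eq]
      refine Eq.trans ?_ hk
      rw [Nat.cast_sub (Nat.one_le_iff_ne_zero.mpr h), Nat.cast_one, sub_smul, one_smul]
      abel⟩
  left_inv := by
    rintro (k | k)
    · simp
    · simp [Fin.cons_self_tail]
  right_inv k := by
    by_cases h : k.1 0 = 0
    · simp only [h, dite_true]
      ext i : 2
      change Fin.cons 0 (Fin.tail k.1) i = k.1 i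
      rw [← h, Fin.cons_self_tail]
    · simp only [h, dite_false]
      ext i : 2
      change Fin.cons (k.1 0 - 1 + 1) (Fin.tail k.1) i = k.1 i
      rw [Nat.sub_add_cancel (Nat.one_le_iff_ne_zero.mpr h), Fin.cons_self_tail]

variable [Fintype ι]

lemma partFn_nil : partFn ([] : List (ZLat ι)) = delta0 := by
  funext γ
  by_cases h : γ = 0
  · subst h
    have : Unique (PartSols ([] : List (ZLat ι)) 0) :=
      ⟨⟨⟨finZeroElim, by simp⟩⟩, fun k => Subtype.ext (funext finZeroElim)⟩
    simp [partFn_apply, delta0]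
  · have : IsEmpty (PartSols ([] : List (ZLat ι)) γ) := ⟨fun k => h (by simp [← k.2])⟩
    simp [partFn_apply, delta0, h]

lemma finite_partSols (u : Amb ι) (S : List (ZLat ι)) (hpos : ∀ b ∈ S, 0 < dotR u (castV b))
    (γ : ZLat ι) : Finite (PartSols S γ) := by
  refine Set.Finite.to_subtype ((finite_coeffs_of_dotR_eq u (fun i => S.get i)
    (fun i => hpos _ (List.get_mem S i)) (dotR u (castV γ))).subset fun k (hk : _ = γ) => ?_)
  rw [Set.mem_ofPred_eq, hk]

/-- Positivity against `u` keeps the solution sets finite; for infinite ones `Nat.card` would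
be `0`. -/
lemma nab_partFn_cons (u : Amb ι) (a : ZLat ι) (S : List (ZLat ι))
    (hpos : ∀ b ∈ a :: S, 0 < dotR u (castV b)) : nab a (partFn (a :: S)) = partFn S := by
  funext γ
  have := finite_partSols u _ hpos γ
  have := finite_partSols u _ hpos (γ - a)
  have := finite_partSols u S (fun b hb => hpos b (List.mem_cons_of_mem a hb)) γ
  simp only [nab, partFn_apply, ← Nat.card_congr (partSolsConsEquiv a S γ), Nat.card_sum]
  push_cast
  ring

lemma nabL_partFn (u : Amb ι) :
    ∀ S : List (ZLat ι), (∀ b ∈ S, 0 < dotR u (castV b)) → nabL S (partFn S) = delta0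
  | [], _ => partFn_nil
  | a :: S, hpos => by
    rw [nabL_perm (List.perm_append_singleton a S).symm, nabL_append, nabL_cons, nabL_nil,
      nab_partFn_cons u a S hpos]
    exact nabL_partFn u S fun b hb => hpos b (List.mem_cons_of_mem a hb)

end PartitionFunction

section SpecialFunction

variable {ι : Type*} [Fintype ι] {X : List (ZLat ι)} {H : Submodule ℝ (Amb ι)} {u : Amb ι}

lemma Reg.neg (hu : Reg X H u) : Reg X H (-u) :=
  ⟨fun v hv => by rw [dotR_neg_left, hu.1 v hv, neg_zero],
    fun a ha haH => by rw [dotR_neg_left, neg_ne_zero]; exact hu.2 a ha haH⟩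

lemma Reg.dotR_ne_zero (hu : Reg X H u) {a : ZLat ι} (ha : a ∈ outSub X H) :
    dotR u (castV a) ≠ 0 := by
  rw [outSub, List.mem_filter, decide_eq_true_iff] at ha
  exact hu.2 a ha.1 ha.2

lemma Reg.dotR_signedOut_pos (hu : Reg X H u) :
    ∀ b ∈ signedOut X H u, 0 < dotR u (castV b) := by
  rw [signedOut, List.forall_mem_map]
  intro a ha
  rcases (hu.dotR_ne_zero ha).lt_or_gt with hneg | hpos
  · rw [if_neg hneg.not_gt, dotR_castV_neg]
    exact neg_pos.mpr hneg
  · rwa [if_pos hpos]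

lemma Reg.signedOut_eq (hu : Reg X H u) : signedOut X H u =
    (outSub X H).map fun a => if decide (dotR u (castV a) < 0) then -a else a := by
  refine List.map_congr_left fun a ha => ?_
  rcases (hu.dotR_ne_zero ha).lt_or_gt with hneg | hpos
  · simp [hneg, hneg.not_gt]
  · simp [hpos, hpos.not_gt]

theorem nabOut_PF (hu : Reg X H u) : nabOut X H (PF X H u) = delta0 :=
  (nabL_flip (fun a => decide (dotR u (castV a) < 0)) _ _).trans <| by
    rw [← hu.signedOut_eq]
    exact nabL_partFn u _ hu.dotR_signedOut_pos

end SpecialFunction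

section Convolution

variable {ι : Type*} [Fintype ι] {u : Amb ι}

def LevelFinite (u : Amb ι) (f : ZLat ι → ℤ) : Prop :=
  ∀ c : ℝ, {γ | f γ ≠ 0 ∧ dotR u (castV γ) = c}.Finite

def SupportPerp (u : Amb ι) (g : ZLat ι → ℤ) : Prop :=
  ∀ γ, g γ ≠ 0 → dotR u (castV γ) = 0

lemma Reg.supportPerp {X : List (ZLat ι)} {H : Submodule ℝ (Amb ι)} (hu : Reg X H u)
    {g : ZLat ι → ℤ} (hg : support g ⊆ {γ | castV γ ∈ H}) : SupportPerp u g :=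
  fun _ hγ => hu.1 _ (hg hγ)

lemma LevelFinite.mul_shift {f : ZLat ι → ℤ} (h : LevelFinite u f) (c : ℤ) (s : ZLat ι) :
    LevelFinite u fun γ => c * f (γ + s) := by
  intro d
  refine ((h (d + dotR u (castV s))).image (· - s)).subset fun γ ⟨hγ, hd⟩ =>
    ⟨γ + s, ⟨right_ne_zero_of_mul hγ, ?_⟩, add_sub_cancel_right γ s⟩
  rw [dotR_castV_add, hd]

lemma LevelFinite.nab {f : ZLat ι → ℤ} (h : LevelFinite u f) (a : ZLat ι) :
    LevelFinite u (nab a f) := by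
  intro c
  refine ((h c).union ((h (c - dotR u (castV a))).image (· + a))).subset fun γ ⟨hγ, hc⟩ => ?_
  rcases ne_zero_or_of_nab_ne_zero hγ with h₀ | h₁
  · exact Or.inl ⟨h₀, hc⟩
  · exact Or.inr ⟨γ - a, ⟨h₁, by rw [dotR_castV_sub, hc]⟩, sub_add_cancel γ a⟩

lemma LevelFinite.nabL {f : ZLat ι → ℤ} (h : LevelFinite u f) (l : List (ZLat ι)) :
    LevelFinite u (nabL l f) := by
  induction l with
  | nil => exact h
  | cons a l ih => exact ih.nab a

lemma levelFinite_partFn (S : List (ZLat ι)) (hpos : ∀ b ∈ S, 0 < dotR u (castV b)) :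
    LevelFinite u (partFn S) := by
  intro c
  refine ((finite_coeffs_of_dotR_eq u (fun i => S.get i) (fun i => hpos _ (List.get_mem S i))
    c).image fun k => ∑ i, (k i : ℤ) • S.get i).subset fun γ ⟨hγ, hc⟩ => ?_
  obtain ⟨⟨k, hk⟩⟩ : Nonempty (PartSols S γ) := by
    by_contra h
    rw [not_nonempty_iff] at h
    exact hγ (by simp [partFn_apply])
  exact ⟨k, by rw [Set.mem_ofPred_eq, hk, hc], hk⟩

lemma Reg.levelFinite_PF {X : List (ZLat ι)} {H : Submodule ℝ (Amb ι)} (hu : Reg X H u) :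
    LevelFinite u (PF X H u) :=
  (levelFinite_partFn _ hu.dotR_signedOut_pos).mul_shift _ _

lemma SupportPerp.nab {g : ZLat ι → ℤ} (hg : SupportPerp u g) {a : ZLat ι}
    (ha : dotR u (castV a) = 0) : SupportPerp u (nab a g) := by
  intro γ hγ
  rcases ne_zero_or_of_nab_ne_zero hγ with h₀ | h₁
  · exact hg γ h₀
  · simpa [dotR_castV_sub, ha] using hg _ h₁

lemma SupportPerp.nabL {g : ZLat ι → ℤ} (hg : SupportPerp u g) :
    ∀ l : List (ZLat ι), (∀ a ∈ l, dotR u (castV a) = 0) → SupportPerp u (nabL l g)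
  | [], _ => hg
  | a :: l, hl => (hg.nabL l fun b hb => hl b (List.mem_cons_of_mem a hb)).nab
      (hl a List.mem_cons_self)

variable {f g : ZLat ι → ℤ}

/-- A summand `f (γ - μ) g μ` can only be nonzero where `⟨u, γ - μ⟩ = ⟨u, γ⟩`. -/
lemma finite_support_conv_summand (hf : LevelFinite u f) (hg : SupportPerp u g) (γ : ZLat ι) :
    (support fun μ => f (γ - μ) * g μ).Finite := by
  refine ((hf (dotR u (castV γ))).image (γ - ·)).subset fun μ hμ => ?_
  refine ⟨γ - μ, ⟨left_ne_zero_of_mul hμ, ?_⟩, sub_sub_cancel γ μ⟩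
  rw [dotR_castV_sub, hg μ (right_ne_zero_of_mul hμ), sub_zero]

lemma nab_conv_left (hf : LevelFinite u f) (hg : SupportPerp u g) (a : ZLat ι) :
    nab a (conv f g) = conv (nab a f) g := by
  funext γ
  rw [nab, conv, conv, ← finsum_sub_distrib (finite_support_conv_summand hf hg γ)
    (finite_support_conv_summand hf hg (γ - a))]
  refine finsum_congr fun μ => ?_
  rw [nab, sub_right_comm γ μ a, sub_mul]

lemma nab_conv_right (hf : LevelFinite u f) (hg : SupportPerp u g) (a : ZLat ι) :
    nab a (conv f g) = conv f (nab a g) := by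
  funext γ
  have hshift : (fun μ => f (γ - μ) * g (μ - a))
      = (fun ν => f (γ - a - ν) * g ν) ∘ Equiv.subRight a := by
    funext μ
    simp only [comp_apply, Equiv.subRight_apply, sub_sub_sub_cancel_right]
  have hfin : (support fun μ => f (γ - μ) * g (μ - a)).Finite := by
    rw [hshift, support_comp_eq_preimage]
    exact (finite_support_conv_summand hf hg (γ - a)).preimage (Equiv.injective _).injOn
  have hsum : ∑ᶠ μ, f (γ - a - μ) * g μ = ∑ᶠ μ, f (γ - μ) * g (μ - a) := by
    rw [hshift]
    exact (finsum_comp_equiv _).symm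
  rw [nab, conv, conv, conv, hsum,
    ← finsum_sub_distrib (finite_support_conv_summand hf hg γ) hfin]
  refine finsum_congr fun μ => ?_
  rw [nab, mul_sub]

lemma nabL_conv_left (hf : LevelFinite u f) (hg : SupportPerp u g) (l : List (ZLat ι)) :
    nabL l (conv f g) = conv (nabL l f) g := by
  induction l with
  | nil => rfl
  | cons a l ih => rw [nabL_cons, ih, nab_conv_left (hf.nabL l) hg, nabL_cons]

lemma nabL_conv_right (hf : LevelFinite u f) (hg : SupportPerp u g) :
    ∀ l : List (ZLat ι), (∀ a ∈ l, dotR u (castV a) = 0) →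
      nabL l (conv f g) = conv f (nabL l g)
  | [], _ => rfl
  | a :: l, hl => by
    have hl' : ∀ b ∈ l, dotR u (castV b) = 0 := fun b hb => hl b (List.mem_cons_of_mem a hb)
    rw [nabL_cons, nabL_conv_right hf hg l hl', nab_conv_right hf (hg.nabL l hl'), nabL_cons]

end Convolution

section Rational

variable {ι : Type*}

lemma mem_inSub {X : List (ZLat ι)} {r : Submodule ℝ (Amb ι)} {a : ZLat ι} :
    a ∈ inSub X r ↔ a ∈ X ∧ castV a ∈ r := by
  simp [inSub]

lemma spanOf_le {M : List (ZLat ι)} {r : Submodule ℝ (Amb ι)} (h : ∀ a ∈ M, castV a ∈ r) :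
    spanOf M ≤ r :=
  Submodule.span_le.mpr (Set.image_subset_iff.mpr h)

lemma mem_spanOf {M : List (ZLat ι)} {a : ZLat ι} (h : a ∈ M) : castV a ∈ spanOf M :=
  Submodule.subset_span ⟨a, h, rfl⟩

lemma spanOf_mono {M M' : List (ZLat ι)} (h : ∀ a ∈ M, a ∈ M') : spanOf M ≤ spanOf M' :=
  spanOf_le fun a ha => mem_spanOf (h a ha)

lemma spanOf_cons (a : ZLat ι) (M : List (ZLat ι)) :
    spanOf (a :: M) = spanOf M ⊔ ℝ ∙ castV a := by
  rw [spanOf, spanOf, sup_comm, ← Submodule.span_insert, ← Set.image_insert_eq]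
  congr 2
  ext b
  simp

lemma spanOf_inSub {X : List (ZLat ι)} {H : Submodule ℝ (Amb ι)} (hH : IsRational X H) :
    spanOf (inSub X H) = H := by
  obtain ⟨Y, hY, rfl⟩ := hH
  exact le_antisymm (spanOf_le fun a ha => (mem_inSub.mp ha).2)
    (spanOf_mono fun a ha => mem_inSub.mpr ⟨hY a ha, mem_spanOf ha⟩)

/-- Extend `M` by vectors of `A` outside its span, one at a time. -/
theorem exists_isRational_hyperplane_ge [Fintype ι] (A M : List (ZLat ι))
    (hM : ∀ a ∈ M, a ∈ A) (hne : spanOf M ≠ spanOf A) :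
    ∃ L, IsRational A L ∧ spanOf M ≤ L ∧
      Module.finrank ℝ L + 1 = Module.finrank ℝ (spanOf A) := by
  have hrank := Submodule.finrank_lt_finrank_of_lt (lt_of_le_of_ne (spanOf_mono hM) hne)
  by_cases hcodim : Module.finrank ℝ (spanOf M) + 1 = Module.finrank ℝ (spanOf A)
  · exact ⟨spanOf M, ⟨M, hM, rfl⟩, le_rfl, hcodim⟩
  obtain ⟨a, haA, haM⟩ : ∃ a ∈ A, castV a ∉ spanOf M := by
    by_contra! h
    exact hne (le_antisymm (spanOf_mono hM) (spanOf_le h))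
  have hcons : Module.finrank ℝ (spanOf (a :: M)) = Module.finrank ℝ (spanOf M) + 1 := by
    rw [spanOf_cons, Submodule.finrank_sup_span_singleton haM]
  obtain ⟨L, hL, hML, hLrank⟩ := exists_isRational_hyperplane_ge A (a :: M)
    (List.forall_mem_cons.mpr ⟨haA, hM⟩) fun h => by rw [h] at hcons; omega
  exact ⟨L, hL, (spanOf_mono fun b hb => List.mem_cons_of_mem a hb).trans hML, hLrank⟩
termination_by Module.finrank ℝ (spanOf A) - Module.finrank ℝ (spanOf M)
decreasing_by omega

lemma nabOut_sub (X : List (ZLat ι)) (r : Submodule ℝ (Amb ι)) (f g : ZLat ι → ℤ) :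
    nabOut X r (f - g) = nabOut X r f - nabOut X r g :=
  nabL_sub _ f g

lemma nabOut_eq_zero_of_subset {Y : List (ZLat ι)} {K L : Submodule ℝ (Amb ι)}
    {g : ZLat ι → ℤ} (hL : nabOut Y L g = 0)
    (hKL : ∀ a ∈ Y, castV a ∈ K → castV a ∈ L) :
    nabOut Y K g = 0 := by
  have hsplit : (outSub Y K).filter (fun a => !decide (castV a ∈ L)) = outSub Y L := by
    simp only [outSub, List.filter_filter]
    refine List.filter_congr fun a ha => ?_
    by_cases haL : castV a ∈ L
    · simp [haL]
    · simpa [haL] using fun h => haL (hKL a ha h)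
  rw [nabOut, nabL_filter (fun a => decide (castV a ∈ L)), hsplit, ← nabOut, hL, nabL_zero]

/-- `Y ∩ K` lies in a rational hyperplane of `span Y`. -/
lemma memDM.nabOut_eq_zero_of_not_le [Fintype ι] {Y : List (ZLat ι)} {g : ZLat ι → ℤ}
    (hg : memDM Y g) {K : Submodule ℝ (Amb ι)} (hK : ¬ spanOf Y ≤ K) : nabOut Y K g = 0 := by
  obtain ⟨L, hL, hKL, hLrank⟩ := exists_isRational_hyperplane_ge Y (inSub Y K)
    (fun a ha => (mem_inSub.mp ha).1)
    (fun h => hK (h ▸ spanOf_le fun a ha => (mem_inSub.mp ha).2))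
  exact nabOut_eq_zero_of_subset (hg L hL hLrank)
    fun a ha haK => hKL (mem_spanOf (mem_inSub.mpr ⟨ha, haK⟩))

lemma nabOut_eq_nabOut_outSub_inSub (X : List (ZLat ι)) (H K : Submodule ℝ (Amb ι))
    (f : ZLat ι → ℤ) : nabOut X K f = nabOut (outSub X H) K (nabOut (inSub X H) K f) := by
  have hout : (outSub X K).filter (fun a => decide (castV a ∉ H)) = outSub (outSub X H) K := by
    simp only [outSub, List.filter_filter, Bool.and_comm]
  have hin : (outSub X K).filter (fun a => !decide (castV a ∉ H)) = outSub (inSub X H) K := by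
    simp only [outSub, inSub, List.filter_filter, decide_not, Bool.not_not, Bool.and_comm]
  rw [nabOut, nabL_filter (fun a => decide (castV a ∉ H)), hout, hin]
  rfl

end Rational

section WallJump

variable {ι : Type*} [Fintype ι] {X : List (ZLat ι)} {H : Submodule ℝ (Amb ι)} {u : Amb ι}
  {g : ZLat ι → ℤ}

lemma nabOut_conv_PF (hu : Reg X H u) (hg : support g ⊆ {γ | castV γ ∈ H}) :
    nabOut X H (conv (PF X H u) g) = conv delta0 g := by
  rw [nabOut, nabL_conv_left hu.levelFinite_PF (hu.supportPerp hg), ← nabOut, nabOut_PF hu]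

/-- The part of `∇_{X\K}` along `H` passes through `𝓟` onto `g`, where it vanishes. -/
lemma nabOut_conv_PF_eq_zero (hu : Reg X H u) (hg : support g ⊆ {γ | castV γ ∈ H})
    {K : Submodule ℝ (Amb ι)} (hgK : nabOut (inSub X H) K g = 0) :
    nabOut X K (conv (PF X H u) g) = 0 := by
  have hperp : ∀ a ∈ outSub (inSub X H) K, dotR u (castV a) = 0 := fun a ha =>
    hu.1 _ (mem_inSub.mp (List.mem_of_mem_filter ha)).2
  have hpass : nabOut (inSub X H) K (conv (PF X H u) g)
      = conv (PF X H u) (nabOut (inSub X H) K g) :=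
    nabL_conv_right hu.levelFinite_PF (hu.supportPerp hg) _ hperp
  rw [nabOut_eq_nabOut_outSub_inSub X H, hpass, hgK, conv_zero]
  exact nabL_zero _

end WallJump

theorem wall_jump_DM_general {ι : Type*} [Fintype ι] (X : List (ZLat ι))
    (hspan : spanOf X = ⊤)
    (H : Submodule ℝ (Amb ι)) (hH : IsRational X H)
    (hHhyp : Module.finrank ℝ H + 1 = Module.finrank ℝ (Amb ι))
    (w : Amb ι) (hw : Reg X H w)
    (q : ZLat ι → ℤ) (hq : memDMrel X H q) :
    memDM X (fun γ => conv (PF X H w) q γ - conv (PF X H (-w)) q γ) := by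
  intro K _ hK
  rw [hspan, finrank_top] at hK
  change nabOut X K (conv (PF X H w) q - conv (PF X H (-w)) q) = 0
  rw [nabOut_sub]
  by_cases hKH : K = H
  · subst hKH
    rw [nabOut_conv_PF hw hq.1, nabOut_conv_PF hw.neg hq.1, sub_self]
  · have hHK : ¬ spanOf (inSub X H) ≤ K := by
      rw [spanOf_inSub hH]
      exact fun hle => hKH (Submodule.eq_of_le_of_finrank_eq hle (by omega)).symm
    have hqK := hq.2.nabOut_eq_zero_of_not_le hHK
    rw [nabOut_conv_PF_eq_zero hw hq.1 hqK, nabOut_conv_PF_eq_zero hw.neg hq.1 hqK, sub_self]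

/-- If `H` is a rational hyperplane with opposite regular faces `±F_H ∋ ±w` in `H^⊥` and
`q ∈ DM(X∩H)`, then `(𝓟_{X\H}^{F_H} - 𝓟_{X\H}^{-F_H}) * q ∈ DM(X)`. -/
theorem wall_jump_DM {ι : Type*} [Fintype ι] (X : List (ZLat ι))
    (hX0 : ∀ a ∈ X, a ≠ 0) (hspan : spanOf X = ⊤)
    (H : Submodule ℝ (Amb ι)) (hH : IsRational X H)
    (hHhyp : Module.finrank ℝ H + 1 = Module.finrank ℝ (Amb ι))
    (w : Amb ι) (hw : Reg X H w)
    (q : ZLat ι → ℤ) (hq : memDMrel X H q) :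
    memDM X (fun γ => conv (PF X H w) q γ - conv (PF X H (-w)) q γ) :=
  wall_jump_DM_general X hspan H hH hHhyp w hw q hq
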